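/- arXiv:2307.03696 — 4 statements merged into one kernel-verified Lean document; each statement's English description precedes it below -/
import Mathlib

section
/- Let π : P(V) → B be the projectivization of a rank-r vector bundle V over a smooth projective variety B, and κ : H*(B)[[λ]] → H*(P(V)) the map sending λ to p = c₁(O(1)) (the Kirwan map). Then for any f = f(λ) ∈ H*(B)[[λ]], one has π_*(κ(f)) = Res_{λ=0} f(λ)/e_λ(V) dλ, where e_λ(V) = Σ_{i=0}^r λ^i c_{r-i}(V) and the residue is the coefficient of λ^{-1} in the Laurent expansion of f(λ)/e_λ(V) at λ = ∞ (equivalently, expanding e_λ(V)^{-1} = λ^{-r}(1 + c₁(V)/λ + …)^{-1} in powers of λ^{-1}). -/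
/-- residue formula for the push-forward along `π : P(V) → B`.
`R = H^*(B)`, `A = H^*(P(V))` with `p = c₁(O(1))` and `1,…,p^{r-1}` an `R`-basis `b`
(Leray–Hirsch) satisfying the Grothendieck relation `hrel` (so `κ(e_λ(V)) = 0`);
`p` is nilpotent (`hpm`), so the Kirwan map `κ(f) = Σ_{k<m} f_k p^k` makes sense for a
power series `f ∈ H^*(B)[[λ]]`.  The push-forward `pr = π_*` is the `R`-linear map with
`π_*(p^k) = δ_{k,r-1}` for `k < r`.  Writing `e_λ(V)^{-1} = λ^{-r} u(λ^{-1})` where `u`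
is the (polynomial, by nilpotence of the Chern classes) inverse of `Σ_i c_i t^i`
(`t = λ^{-1}`, hypothesis `hu`), the residue `Res_{λ=0} f(λ)/e_λ(V) dλ`, i.e. the
coefficient of `λ^{-1}` of `f(λ)·λ^{-r}·u(λ^{-1})`, equals `Σ_j f_{r-1+j} u_j`.
Then `π_*(κ(f)) = Res_{λ=0} f(λ)/e_λ(V) dλ`. -/
theorem stmt2 (R A : Type*) [CommRing R] [CommRing A] [Algebra R A]
    (r : ℕ) (hr : 1 ≤ r) (c : ℕ → R) (hc0 : c 0 = 1)
    (hcnil : ∀ i, 1 ≤ i → IsNilpotent (c i))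
    (u : Polynomial R)
    (hu : (∑ i ∈ Finset.range (r + 1), Polynomial.C (c i) * Polynomial.X ^ i) * u = 1)
    (p : A) (m : ℕ) (hpm : p ^ m = 0)
    (b : Module.Basis (Fin r) R A) (hb : ∀ k : Fin r, b k = p ^ (k : ℕ))
    (hrel : ∑ i ∈ Finset.range (r + 1), algebraMap R A (c i) * p ^ (r - i) = 0)
    (pr : A →ₗ[R] R)
    (hpr : ∀ k : Fin r, pr (b k) = if (k : ℕ) = r - 1 then 1 else 0)
    (f : PowerSeries R) :
    pr (∑ k ∈ Finset.range m, PowerSeries.coeff (R := R) k f • p ^ k)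
      = ∑ j ∈ Finset.range (u.natDegree + 1),
          PowerSeries.coeff (R := R) (r - 1 + j) f * u.coeff j := by
  have hφ0 : ∀ n, n < r → pr (p ^ n) = if n = r - 1 then 1 else 0 := by
    intro n hn
    have := hpr ⟨n, hn⟩
    rwa [hb] at this
  have hφm : ∀ n, m ≤ n → pr (p ^ n) = 0 := by
    intro n hn
    have hz : p ^ n = 0 := by
      have h : p ^ n = p ^ m * p ^ (n - m) := by rw [← pow_add]; congr 1; omega
      rw [h, hpm, zero_mul]
    rw [hz, map_zero]
  set P : Polynomial R := ∑ i ∈ Finset.range (r + 1), Polynomial.C (c i) * Polynomial.X ^ i with hP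
  have hPc : ∀ i, P.coeff i = if i ≤ r then c i else 0 := by
    intro i
    simp only [hP, Polynomial.finset_sum_coeff, Polynomial.coeff_C_mul, Polynomial.coeff_X_pow,
      mul_ite, mul_one, mul_zero]
    rw [Finset.sum_ite_eq (Finset.range (r + 1)) i c]
    simp [Nat.lt_succ_iff]
  have hrec : ∀ n, ∑ i ∈ Finset.range (r + 1), c i * pr (p ^ (n + (r - i))) = 0 := by
    intro n
    have h1 : ∑ i ∈ Finset.range (r + 1), (c i) • (p ^ (n + (r - i))) = 0 := by
      have h2 := congrArg (fun x => p ^ n * x) hrel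
      simp only [Finset.mul_sum, mul_zero] at h2
      rw [← h2]
      apply Finset.sum_congr rfl
      intro i _
      rw [Algebra.smul_def, pow_add]; ring
    have h3 := congrArg pr h1
    simpa [map_sum, map_smul, smul_eq_mul] using h3
  have key : ∀ j, pr (p ^ (r - 1 + j)) = u.coeff j := by
    intro j
    induction j using Nat.strong_induction_on with
    | _ j ih =>
      rcases Nat.eq_zero_or_pos j with hj | hj
      · subst hj
        have h1 : pr (p ^ (r - 1)) = 1 := by rw [hφ0 (r - 1) (by omega)]; simp
        have h2 : u.coeff 0 = 1 := by
          have h3 : (P * u).coeff 0 = (1 : Polynomial R).coeff 0 := by rw [hu]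
          rw [Polynomial.mul_coeff_zero, Polynomial.coeff_one, if_pos rfl,
            hPc 0, if_pos (by omega), hc0, one_mul] at h3
          exact h3
        simpa [h2] using h1
      · have hA := hrec (j - 1)
        rw [Finset.sum_range_succ'] at hA
        have hB : ∑ i ∈ Finset.range (j + 1), P.coeff i * u.coeff (j - i) = 0 := by
          have h3 : (P * u).coeff j = (1 : Polynomial R).coeff j := by rw [hu]
          rw [Polynomial.coeff_mul, Finset.Nat.sum_antidiagonal_eq_sum_range_succ_mk] at h3
          simp only [Polynomial.coeff_one] at h3
          rw [if_neg (by omega : ¬ j = 0)] at h3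
          exact h3
        rw [Finset.sum_range_succ'] at hB
        have hS1 : ∑ i ∈ Finset.range r, c (i + 1) * pr (p ^ (j - 1 + (r - (i + 1))))
            = ∑ i ∈ Finset.range (r + j), P.coeff (i + 1) *
                (if i + 1 ≤ j then u.coeff (j - (i + 1)) else 0) := by
          rw [← Finset.sum_subset (Finset.range_subset_range.mpr (by omega : r ≤ r + j))
            (fun i _ hi => by
              rw [Finset.mem_range] at hi
              rw [hPc (i + 1), if_neg (by omega), zero_mul])]
          apply Finset.sum_congr rfl
          intro i hi
          rw [Finset.mem_range] at hi
          rw [hPc (i + 1), if_pos (by omega)]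
          congr 1
          by_cases hij : i + 1 ≤ j
          · rw [if_pos hij, ← ih (j - (i + 1)) (by omega)]
            congr 2
            omega
          · rw [if_neg hij, hφ0 _ (by omega), if_neg (by omega)]
        have hS2 : ∑ i ∈ Finset.range j, P.coeff (i + 1) * u.coeff (j - (i + 1))
            = ∑ i ∈ Finset.range (r + j), P.coeff (i + 1) *
                (if i + 1 ≤ j then u.coeff (j - (i + 1)) else 0) := by
          rw [← Finset.sum_subset (Finset.range_subset_range.mpr (by omega : j ≤ r + j))
            (fun i _ hi => by
              rw [Finset.mem_range] at hi
              rw [if_neg (by omega), mul_zero])]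
          apply Finset.sum_congr rfl
          intro i hi
          rw [Finset.mem_range] at hi
          rw [if_pos (by omega)]
        rw [hc0, one_mul] at hA
        rw [hPc 0, if_pos (by omega), hc0, one_mul, Nat.sub_zero] at hB
        have he : j - 1 + (r - 0) = r - 1 + j := by omega
        rw [he, hS1] at hA
        rw [hS2] at hB
        exact add_left_cancel (hA.trans hB.symm)
  rw [map_sum]
  simp only [map_smul, smul_eq_mul]
  set N := m + u.natDegree + 1 with hN
  have hL : ∑ k ∈ Finset.range m, PowerSeries.coeff (R := R) k f * pr (p ^ k)
      = ∑ j ∈ Finset.range N, PowerSeries.coeff (R := R) (r - 1 + j) f * u.coeff j := by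
    conv_lhs => rw [Finset.range_eq_Ico]
    rw [← Finset.sum_subset
        (by intro x hx; simp only [Finset.mem_Ico] at *; omega :
          Finset.Ico (r - 1) m ⊆ Finset.Ico 0 m)
        (fun k hk hk2 => by
          rw [Finset.mem_Ico] at hk
          rw [Finset.mem_Ico] at hk2
          rw [hφ0 k (by omega), if_neg (by omega), mul_zero]),
      Finset.sum_Ico_eq_sum_range,
      Finset.sum_subset (Finset.range_subset_range.mpr (by omega : m - (r - 1) ≤ N))
        (fun i _ hi => by
          rw [Finset.mem_range] at hi
          rw [hφm _ (by omega), mul_zero])]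
    apply Finset.sum_congr rfl
    intro i _
    rw [key i]
  have hR : ∑ j ∈ Finset.range (u.natDegree + 1), PowerSeries.coeff (R := R) (r - 1 + j) f * u.coeff j
      = ∑ j ∈ Finset.range N, PowerSeries.coeff (R := R) (r - 1 + j) f * u.coeff j := by
    rw [Finset.sum_subset (Finset.range_subset_range.mpr (by omega : u.natDegree + 1 ≤ N))]
    intro i _ hi
    rw [Finset.mem_range] at hi
    rw [Polynomial.coeff_eq_zero_of_natDegree_lt (by omega), mul_zero]
  rw [hR, ← hL]
end

section
/- Let S and N₀, N₁, N₂, … be mutually commuting endomorphisms of a finite-dimensional vector space such that S is semisimple (diagonalizable) and N₀ is nilpotent. Suppose a formal power series v(x) = v₀ + v₁x + v₂x² + ⋯ with vector coefficients satisfies the differential equation (x∂_x + x^{-1}S + N₀ + N₁x + N₂x² + ⋯)v(x) = 0 and the initial conditions S v₀ = 0 and N_i v₀ = 0 for all i. Then v(x) = v₀, i.e., v_n = 0 for all n ≥ 1. -/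
lemma stmt6_aux (V : Type*) [AddCommGroup V] [Module ℂ V]
    (S : Module.End ℂ V)
    (hS : (⨆ μ : ℂ, S.eigenspace μ) = ⊤)
    (w : V) (hw : S (S w) = 0) : S w = 0 := by
  set K := S.eigenspace 0 with hK
  set W : Submodule ℂ V := ⨆ (μ : ℂ) (_ : μ ≠ 0), S.eigenspace μ with hW
  have hdisj : Disjoint K W := S.eigenspaces_iSupIndep 0
  have hsup : K ⊔ W = ⊤ := by
    rw [← hS, iSup_split_single (fun μ : ℂ => S.eigenspace μ) 0]
  have hWmap : ∀ u ∈ W, S u ∈ W := by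
    intro u hu
    have h1 : Submodule.map S W ≤ W := by
      rw [hW, Submodule.map_iSup]
      refine iSup_le fun μ => ?_
      rw [Submodule.map_iSup]
      refine iSup_le fun hμ => ?_
      refine le_trans ?_ (le_iSup₂ (f := fun (μ : ℂ) (_ : μ ≠ 0) => S.eigenspace μ) μ hμ)
      rintro x ⟨y, hy, rfl⟩
      simp only [SetLike.mem_coe] at hy
      rw [Module.End.mem_eigenspace_iff] at hy ⊢
      rw [hy, map_smul, hy]
    exact h1 ⟨u, hu, rfl⟩
  have hwtop : w ∈ K ⊔ W := by rw [hsup]; trivial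
  obtain ⟨k, hk, u, hu, rfl⟩ := Submodule.mem_sup.mp hwtop
  have hSk : S k = 0 := by
    rw [hK, Module.End.mem_eigenspace_iff] at hk
    simpa using hk
  have hSw : S (k + u) = S u := by rw [map_add, hSk, zero_add]
  rw [hSw] at hw ⊢
  have hmem : S u ∈ K ⊓ W := by
    refine ⟨?_, hWmap u hu⟩
    show S u ∈ S.eigenspace 0
    rw [Module.End.mem_eigenspace_iff]
    simpa using hw
  rw [hdisj.eq_bot] at hmem
  simpa using hmem

/-- Let `S, N₀, N₁, …` be mutually commuting endomorphisms of a
finite-dimensional complex vector space, `S` semisimple (diagonalizable, i.e. the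
eigenspaces of `S` span) and `N 0` nilpotent.  If `v(x) = Σ vₙ xⁿ` satisfies
`(x∂ₓ + x⁻¹S + N₀ + N₁x + ⋯) v(x) = 0`, equivalently the recursion
`S v_{n+1} + n·vₙ + Σ_{i=0}^n Nᵢ v_{n-i} = 0` for all `n ≥ 0`, and `S v₀ = 0`,
`Nᵢ v₀ = 0` for all `i`, then `vₙ = 0` for all `n ≥ 1`. -/
theorem stmt6 (V : Type*) [AddCommGroup V] [Module ℂ V] [FiniteDimensional ℂ V]
    (S : Module.End ℂ V) (N : ℕ → Module.End ℂ V)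
    (hSsemisimple : (⨆ μ : ℂ, S.eigenspace μ) = ⊤)
    (hSN : ∀ i, Commute S (N i)) (hNN : ∀ i j, Commute (N i) (N j))
    (hnil : IsNilpotent (N 0))
    (v : ℕ → V)
    (hrec : ∀ n : ℕ,
      S (v (n + 1)) + (n : ℂ) • v n
        + ∑ i ∈ Finset.range (n + 1), (N i) (v (n - i)) = 0)
    (hv0S : S (v 0) = 0) (hv0N : ∀ i, (N i) (v 0) = 0) :
    ∀ n : ℕ, 1 ≤ n → v n = 0 := by
  have main : ∀ n : ℕ, v (n + 1) = 0 := by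
    intro n
    induction n using Nat.strong_induction_on with
    | _ n ih =>
    have hIH : ∀ k, 1 ≤ k → k ≤ n → v k = 0 := by
      intro k h1 h2
      cases k with
      | zero => omega
      | succ m => exact ih m (by omega)
    -- Step 1: S (v (n+1)) = 0
    have hA : S (v (n + 1)) = 0 := by
      have h := hrec n
      have hsum : ∑ i ∈ Finset.range (n + 1), (N i) (v (n - i)) = 0 := by
        refine Finset.sum_eq_zero fun i hi => ?_
        rcases eq_or_lt_of_le (Nat.le_of_lt_succ (Finset.mem_range.mp hi)) with h' | h'
        · rw [h', Nat.sub_self]; exact hv0N n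
        · rw [hIH (n - i) (by omega) (by omega), map_zero]
      have hnv : (n : ℂ) • v n = 0 := by
        rcases Nat.eq_zero_or_pos n with rfl | hp
        · simp
        · rw [hIH n hp le_rfl, smul_zero]
      rw [hsum, hnv, add_zero, add_zero] at h
      exact h
    -- Step 2: S (v (n+2)) + ((n:ℂ)+1) • v (n+1) + N 0 (v (n+1)) = 0
    have hB : S (v (n + 2)) + ((n : ℂ) + 1) • v (n + 1) + (N 0) (v (n + 1)) = 0 := by
      have h := hrec (n + 1)
      rw [Finset.sum_range_succ'] at h
      have hsum : ∑ i ∈ Finset.range (n + 1), (N (i + 1)) (v (n + 1 - (i + 1))) = 0 := by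
        refine Finset.sum_eq_zero fun i hi => ?_
        rcases eq_or_lt_of_le (Nat.le_of_lt_succ (Finset.mem_range.mp hi)) with h' | h'
        · rw [h']; simpa using hv0N (n + 1)
        · have : n + 1 - (i + 1) = n - i := by omega
          rw [this, hIH (n - i) (by omega) (by omega), map_zero]
      rw [hsum, zero_add] at h
      have hcast : ((n + 1 : ℕ) : ℂ) = (n : ℂ) + 1 := by push_cast; ring
      rw [hcast] at h
      simpa using h
    -- Step 3: S (v (n+2)) = 0
    have hC : S (v (n + 2)) = 0 := by
      apply stmt6_aux V S hSsemisimple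
      have h := congrArg S hB
      rw [map_add, map_add, map_smul, hA, smul_zero, map_zero] at h
      have hcomm : S ((N 0) (v (n + 1))) = (N 0) (S (v (n + 1))) := by
        have := (hSN 0).eq
        calc S ((N 0) (v (n + 1))) = (S * N 0) (v (n + 1)) := rfl
          _ = (N 0 * S) (v (n + 1)) := by rw [this]
          _ = (N 0) (S (v (n + 1))) := rfl
      rw [hcomm, hA, map_zero, add_zero, add_zero] at h
      exact h
    -- Step 4: ((n+1) + N 0) (v (n+1)) = 0 with the operator a unit
    have hD : (algebraMap ℂ (Module.End ℂ V) ((n : ℂ) + 1) + N 0) (v (n + 1)) = 0 := by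
      rw [hC, zero_add] at hB
      rw [LinearMap.add_apply]
      have : (algebraMap ℂ (Module.End ℂ V) ((n : ℂ) + 1)) (v (n + 1))
          = ((n : ℂ) + 1) • v (n + 1) := by
        exact Module.algebraMap_end_apply (R := ℂ) (S := ℂ) (M := V) ((n : ℂ) + 1) (v (n + 1))
      rw [this]
      exact hB
    have hunit : IsUnit (algebraMap ℂ (Module.End ℂ V) ((n : ℂ) + 1) + N 0) := by
      refine hnil.isUnit_add_left_of_commute ?_ ?_
      · refine (isUnit_iff_ne_zero.mpr ?_).map (algebraMap ℂ (Module.End ℂ V))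
        have : ((n : ℂ) + 1) = ((n + 1 : ℕ) : ℂ) := by push_cast; ring
        rw [this]
        exact Nat.cast_ne_zero.mpr (Nat.succ_ne_zero n)
      · exact (Algebra.commute_algebraMap_right _ _)
    obtain ⟨u, hu⟩ := hunit
    have h1 : ((↑u⁻¹ * ↑u : Module.End ℂ V)) (v (n + 1)) = v (n + 1) := by
      rw [u.inv_mul]; rfl
    calc v (n + 1) = ((↑u⁻¹ * ↑u : Module.End ℂ V)) (v (n + 1)) := h1.symm
      _ = (↑u⁻¹ : Module.End ℂ V) ((↑u : Module.End ℂ V) (v (n + 1))) := rfl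
      _ = 0 := by rw [hu, hD, map_zero]
  intro n hn
  cases n with
  | zero => omega
  | succ m => exact main m
end

section
/- Let κ : H*(B)[λ, z, z^{-1}] → H*(P(V))[z, z^{-1}] be the map induced by λ ↦ p = c₁(O(1)), and define the Fourier transform of J(λ) ∈ H*(B)[λ, z, z^{-1}] by Ĵ(q) = Σ_{k∈ℤ} κ(𝒮^{-k}J) q^k, where 𝒮(f)(λ) = e_λ(V)f(λ−z). Then: (a) Ĵ(q) = Σ_{k≥0} J(p+kz) q^k / ∏_{c=1}^k e_{p+cz}(V) (terms with k < 0 vanish because κ(e_λ(V)) = 0 in H*(P(V))); (b) the Fourier transform intertwines multiplication by λ with the operator zq∂_q + p, i.e., (λJ)^ = (zq∂_q + p)Ĵ; and (c) it intertwines 𝒮 with multiplication by q, i.e., (𝒮J)^ = qĴ. -/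
/-- The shift operator `𝒮 : J(λ) ↦ e_λ(V)·J(λ−z)` on `H^*(B)[λ, z, z^{-1}]`.
Here the coefficient ring `R` stands for `H^*(B)[z,z^{-1}]` with distinguished
element `zR = z`, `λ` is the polynomial variable, and `e` is the equivariant
Euler class `e_λ(V)` viewed as a polynomial in `λ`. -/
noncomputable def shiftOp {R : Type*} [CommRing R] (e : Polynomial R) (zR : R)
    (J : Polynomial R) : Polynomial R :=
  e * J.comp (Polynomial.X - Polynomial.C zR)

/-- The Fourier transform `Ĵ(q) = Σ_{k∈ℤ} κ(𝒮^{-k}J) q^k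
= Σ_{k≥0} J(p+kz) q^k / ∏_{c=1}^k e_{p+cz}(V)`, where `φ : R → A` implements the
Kirwan map `κ` on coefficients (`A = H^*(P(V))[z,z^{-1}]`, `κ(λ) = p`), and
`u c` is the inverse of `e_{p+cz}(V)` (invertible in `H^*(P(V))[z,z^{-1}]`). -/
noncomputable def fourierFT {R A : Type*} [CommRing R] [CommRing A] (φ : R →+* A)
    (p z : A) (u : ℕ → A) (J : Polynomial R) : PowerSeries A :=
  PowerSeries.mk fun k => Polynomial.eval₂ φ (p + k • z) J * ∏ cc ∈ Finset.Icc 1 k, u cc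

/-- With `hrel : κ(e_λ(V)) = p^r + c₁(V)p^{r-1} + ⋯ + c_r(V) = 0` and
`hu : e_{p+cz}(V)·(u c) = 1` for `c ≥ 1`:
(a) the terms of the Fourier sum with `k < 0`, namely `κ(𝒮^m J)` for `m ≥ 1`, vanish,
so `Ĵ(q) = Σ_{k≥0} J(p+kz) q^k / ∏_{c=1}^k e_{p+cz}(V)` (the definition of `fourierFT`);
(b) the Fourier transform intertwines `λ` with `zq∂_q + p`
(coefficientwise, `zq∂_q + p` multiplies the `q^k`-coefficient by `p + kz`);
(c) it intertwines `𝒮` with multiplication by `q`. -/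
theorem stmt9 {R A : Type*} [CommRing R] [CommRing A] (φ : R →+* A)
    (r : ℕ) (c : ℕ → R) (zR : R) (p z : A) (hz : φ zR = z)
    (e : Polynomial R)
    (he : e = ∑ i ∈ Finset.range (r + 1), Polynomial.C (c (r - i)) * Polynomial.X ^ i)
    (hrel : Polynomial.eval₂ φ p e = 0)
    (u : ℕ → A)
    (hu : ∀ cc : ℕ, 1 ≤ cc → Polynomial.eval₂ φ (p + cc • z) e * u cc = 1) :
    (∀ m : ℕ, 1 ≤ m → ∀ J : Polynomial R,
        Polynomial.eval₂ φ p ((shiftOp e zR)^[m] J) = 0)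
    ∧ (∀ (J : Polynomial R) (k : ℕ),
        PowerSeries.coeff (R := A) k (fourierFT φ p z u (Polynomial.X * J))
          = (p + k • z) * PowerSeries.coeff (R := A) k (fourierFT φ p z u J))
    ∧ (∀ J : Polynomial R,
        fourierFT φ p z u (shiftOp e zR J) = PowerSeries.X * fourierFT φ p z u J) := by

  refine ⟨?_, ?_, ?_⟩
  · intro m hm J
    obtain ⟨n, rfl⟩ := Nat.exists_eq_add_of_le hm
    rw [Function.iterate_add_apply, Function.iterate_one]
    simp [shiftOp, Polynomial.eval₂_mul, hrel]
  · intro J k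
    simp [fourierFT, Polynomial.eval₂_mul, mul_assoc]
  · intro J
    ext k
    rcases k with _ | n
    · simp [fourierFT, shiftOp, Polynomial.eval₂_mul, hrel]
    · rw [PowerSeries.coeff_succ_X_mul]
      simp only [fourierFT, PowerSeries.coeff_mk, shiftOp, Polynomial.eval₂_mul]
      rw [Polynomial.eval₂_comp]
      have hx : Polynomial.eval₂ φ (p + (n + 1) • z) (Polynomial.X - Polynomial.C zR)
          = p + n • z := by
        simp [hz, succ_nsmul]
        ring
      rw [hx, Finset.prod_Icc_succ_top (Nat.le_add_left 1 n)]
      calc Polynomial.eval₂ φ (p + (n+1) • z) e * Polynomial.eval₂ φ (p + n • z) J *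
            ((∏ cc ∈ Finset.Icc 1 n, u cc) * u (n+1))
          = Polynomial.eval₂ φ (p + n • z) J * (∏ cc ∈ Finset.Icc 1 n, u cc) *
            (Polynomial.eval₂ φ (p + (n+1) • z) e * u (n+1)) := by ring
        _ = Polynomial.eval₂ φ (p + n • z) J * ∏ cc ∈ Finset.Icc 1 n, u cc := by
            rw [hu (n+1) (Nat.le_add_left 1 n)]; ring
end

section
/- For the projective bundle P(V) of a rank-r bundle V over B with p = c₁(O(1)), the two pairings are related by a residue formula: for f(λ), g(λ) ∈ H*(B)[λ], one has ∫_{P(V)} κ(f) ∪ κ(g) = Res_{λ=0} (∫_B f(λ)g(λ) e_λ(V)^{-1}) dλ, where the residue means the coefficient of λ^{-1} of the Laurent expansion at λ = ∞ of ∫_B f(λ)g(λ)e_λ(V)^{-1} ∈ ℂ[λ,λ^{-1}]]. -/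
/-- residue formula relating the pairings of `P(V)` and of `V`.
`R = H^*(B)`, `A = H^*(P(V))`, `p = c₁(O(1))` with the Grothendieck relation `hrel`
(`κ(e_λ(V)) = 0`); `intB = ∫_B`, `intPV = ∫_{P(V)}` with `∫_{P(V)} x·p^k = δ_{k,r-1}∫_B x`
for `k < r` (`hint`); the Kirwan map on a polynomial `f(λ)` is `κ(f) = f(p) = aeval p f`.
Writing `e_λ(V)^{-1} = λ^{-r}u(λ^{-1})` with `u` the (polynomial) inverse of
`Σ_i c_i t^i` (`hu`), the coefficient of `λ^{-1}` of the Laurent expansion at `λ = ∞`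
of `∫_B f(λ)g(λ)e_λ(V)^{-1}` is `Σ_j intB((fg)_{r-1+j}·u_j)`.  Then
`∫_{P(V)} κ(f) ∪ κ(g) = Res_{λ=0} (∫_B f(λ)g(λ)e_λ(V)^{-1}) dλ`. -/
theorem stmt18 (R A : Type*) [CommRing R] [CommRing A] [Algebra R A]
    (r : ℕ) (hr : 1 ≤ r) (c : ℕ → R) (hc0 : c 0 = 1)
    (hcnil : ∀ i, 1 ≤ i → IsNilpotent (c i))
    (u : Polynomial R)
    (hu : (∑ i ∈ Finset.range (r + 1), Polynomial.C (c i) * Polynomial.X ^ i) * u = 1)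
    (p : A)
    (hrel : ∑ i ∈ Finset.range (r + 1), algebraMap R A (c i) * p ^ (r - i) = 0)
    (intB : R →+ ℂ) (intPV : A →+ ℂ)
    (hint : ∀ (x : R) (k : ℕ), k < r →
      intPV (algebraMap R A x * p ^ k) = if k = r - 1 then intB x else 0)
    (f g : Polynomial R) :
    intPV (Polynomial.aeval p f * Polynomial.aeval p g)
      = ∑ j ∈ Finset.range (u.natDegree + 1),
          intB ((f * g).coeff (r - 1 + j) * u.coeff j) := by
  classical
  set P : Polynomial R := ∑ i ∈ Finset.range (r + 1), Polynomial.C (c i) * Polynomial.X ^ i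
    with hPdef
  have hPc : ∀ k, P.coeff k = if k ≤ r then c k else 0 := by
    intro k
    rw [hPdef, Polynomial.finset_sum_coeff]
    simp only [Polynomial.coeff_C_mul, Polynomial.coeff_X_pow, mul_ite, mul_one, mul_zero]
    rw [Finset.sum_ite_eq (Finset.range (r + 1)) k c]
    simp [Nat.lt_succ_iff]
  have hu0 : u.coeff 0 = 1 := by
    have h1 := congrArg (fun q => Polynomial.coeff q 0) hu
    simp only [Polynomial.mul_coeff_zero, Polynomial.coeff_one, if_pos rfl] at h1
    rw [hPc 0, if_pos (Nat.zero_le r), hc0, one_mul] at h1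
    exact h1
  have hucoeff : ∀ m, u.coeff (m + 1)
      = -∑ i ∈ Finset.range r, (if i ≤ m then c (i + 1) * u.coeff (m - i) else 0) := by
    intro m
    have h1 := congrArg (fun q => Polynomial.coeff q (m + 1)) hu
    simp only [Polynomial.coeff_one, Nat.succ_ne_zero, if_neg (Nat.succ_ne_zero m)] at h1
    rw [Polynomial.coeff_mul, Finset.Nat.sum_antidiagonal_eq_sum_range_succ_mk] at h1
    rw [Finset.sum_range_succ'] at h1
    simp only [hPc, Nat.sub_zero, if_pos (Nat.zero_le r), hc0, one_mul] at h1
    have h2 : ∀ k, m + 1 - (k + 1) = m - k := by intro k; omega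
    simp only [h2] at h1
    have h3 : ∑ k ∈ Finset.range (m + 1), (if k + 1 ≤ r then c (k + 1) else 0) * u.coeff (m - k)
        = ∑ i ∈ Finset.range r, (if i ≤ m then c (i + 1) * u.coeff (m - i) else 0) := by
      simp only [ite_mul, zero_mul]
      rw [← Finset.sum_filter, ← Finset.sum_filter]
      apply Finset.sum_congr
      · ext a
        simp only [Finset.mem_filter, Finset.mem_range]
        omega
      · intros; rfl
    rw [h3, if_neg (by trivial)] at h1
    exact eq_neg_of_add_eq_zero_right h1
  have hpr : p ^ r = -∑ i ∈ Finset.range r, algebraMap R A (c (i + 1)) * p ^ (r - (i + 1)) := by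
    have h2 := hrel
    rw [Finset.sum_range_succ'] at h2
    rw [hc0] at h2
    simp only [map_one, one_mul, Nat.sub_zero] at h2
    exact eq_neg_of_add_eq_zero_right h2
  have Q : ∀ m (x : R), intPV (algebraMap R A x * p ^ (r - 1 + m)) = intB (x * u.coeff m) := by
    intro m
    induction m using Nat.strong_induction_on with
    | _ m ih =>
      intro x
      cases m with
      | zero =>
        rw [Nat.add_zero, hint x (r - 1) (by omega), if_pos rfl, hu0, mul_one]
      | succ m =>
        have he : r - 1 + (m + 1) = r + m := by omega
        have e1 : algebraMap R A x * p ^ (r + m)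
            = -∑ i ∈ Finset.range r,
                algebraMap R A (x * c (i + 1)) * p ^ (r - (i + 1) + m) := by
          rw [pow_add, hpr, neg_mul, mul_neg, Finset.sum_mul, Finset.mul_sum, neg_inj]
          apply Finset.sum_congr rfl
          intro i _
          rw [map_mul, pow_add]
          ring
        rw [he, e1, map_neg, map_sum]
        have e2 : ∀ i ∈ Finset.range r,
            intPV (algebraMap R A (x * c (i + 1)) * p ^ (r - (i + 1) + m))
              = intB (x * (if i ≤ m then c (i + 1) * u.coeff (m - i) else 0)) := by
          intro i hi
          rw [Finset.mem_range] at hi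
          by_cases him : i ≤ m
          · have h4 : r - (i + 1) + m = r - 1 + (m - i) := by omega
            rw [h4, ih (m - i) (by omega) (x * c (i + 1)), if_pos him, mul_assoc]
          · have hk : r - (i + 1) + m < r := by omega
            rw [hint _ _ hk, if_neg (by omega), if_neg him, mul_zero, map_zero]
        rw [Finset.sum_congr rfl e2, hucoeff m, mul_neg, map_neg, Finset.mul_sum, map_sum]
  have key : ∀ (n : ℕ) (x : R), intPV (algebraMap R A x * p ^ n)
      = if r - 1 ≤ n then intB (x * u.coeff (n - (r - 1))) else 0 := by
    intro n x
    by_cases hn : r - 1 ≤ n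
    · rw [if_pos hn]
      have h5 := Q (n - (r - 1)) x
      rwa [Nat.add_sub_cancel' hn] at h5
    · rw [if_neg hn, hint x n (by omega), if_neg (by omega)]
  rw [← map_mul]
  set h := f * g with hh
  rw [Polynomial.aeval_eq_sum_range, map_sum]
  have e3 : ∀ n ∈ Finset.range (h.natDegree + 1), intPV (h.coeff n • p ^ n)
      = if r - 1 ≤ n then intB (h.coeff n * u.coeff (n - (r - 1))) else 0 := by
    intro n _
    rw [Algebra.smul_def, key]
  rw [Finset.sum_congr rfl e3]
  set M := h.natDegree + u.natDegree + 2 with hM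
  have eL : ∑ n ∈ Finset.range (h.natDegree + 1),
        (if r - 1 ≤ n then intB (h.coeff n * u.coeff (n - (r - 1))) else 0)
      = ∑ n ∈ Finset.range (r - 1 + M),
        (if r - 1 ≤ n then intB (h.coeff n * u.coeff (n - (r - 1))) else 0) := by
    apply Finset.sum_subset
    · exact Finset.range_subset_range.mpr (by omega)
    · intro n _ hn
      rw [Finset.mem_range, not_lt] at hn
      rw [Polynomial.coeff_eq_zero_of_natDegree_lt (by omega), zero_mul, map_zero, ite_self]
  rw [eL, Finset.sum_range_add]
  have eZ : ∑ n ∈ Finset.range (r - 1),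
      (if r - 1 ≤ n then intB (h.coeff n * u.coeff (n - (r - 1))) else 0) = 0 := by
    apply Finset.sum_eq_zero
    intro n hn
    rw [Finset.mem_range] at hn
    rw [if_neg (by omega)]
  rw [eZ, zero_add]
  have eJ : ∀ j ∈ Finset.range M,
      (if r - 1 ≤ r - 1 + j then intB (h.coeff (r - 1 + j) * u.coeff (r - 1 + j - (r - 1))) else 0)
        = intB (h.coeff (r - 1 + j) * u.coeff j) := by
    intro j _
    rw [if_pos (by omega), Nat.add_sub_cancel_left]
  rw [Finset.sum_congr rfl eJ]
  symm
  apply Finset.sum_subset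
  · exact Finset.range_subset_range.mpr (by omega)
  · intro j _ hj
    rw [Finset.mem_range, not_lt] at hj
    rw [show u.coeff j = 0 from Polynomial.coeff_eq_zero_of_natDegree_lt (by omega), mul_zero,
      map_zero]
end
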